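/- A Lie subalgebra u of a Lie bialgebra (g, δ) satisfies δ(u) ⊂ g ⊗ [u,u] + [u,u] ⊗ g if and only if [[u,u]⁰, [u,u]⁰]_{g*} ⊂ u⁰, where [·,·]_{g*} is the Lie bracket on g* dual to δ and V⁰ denotes the annihilator of a subspace V ⊂ g in g*. -/

import Mathlib

/- STATEMENT 9: For a finite-dimensional Lie bialgebra (g, δ) and a Lie subalgebra u ⊆ g,
δ(u) ⊆ g ⊗ [u,u] + [u,u] ⊗ g  ⟺  [[u,u]⁰, [u,u]⁰]_{g*} ⊆ u⁰,
where [·,·]_{g*} is the Lie bracket on g* dual to δ and V⁰ the annihilator. -/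

open TensorProduct

section defs

variable (K : Type*) [Field K] [CharZero K]
variable (L : Type*) [LieRing L] [LieAlgebra K L]

/-- the image of `p ⊗ q` in `L ⊗ L`, for submodules `p q ⊆ L`. -/
noncomputable def tpSub (p q : Submodule K L) : Submodule K (L ⊗[K] L) :=
  Submodule.map₂ (TensorProduct.mk K L L) p q

/-- the derived subalgebra `[u,u]` of a Lie subalgebra `u`, as a submodule of `L`. -/
def derived (u : LieSubalgebra K L) : Submodule K L :=
  Submodule.span K {z : L | ∃ a ∈ u, ∃ b ∈ u, z = ⁅a, b⁆}

/-- the bracket on `g*` dual to a cobracket `δ` : `[ξ,η](z) = (ξ ⊗ η)(δ z)`. -/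
noncomputable def dualBr (δ : L →ₗ[K] L ⊗[K] L) (ξ η : Module.Dual K L) :
    Module.Dual K L :=
  LinearMap.mul' K K ∘ₗ TensorProduct.map ξ η ∘ₗ δ

end defs

/-! `L ⊗ D + D ⊗ L` is the kernel of `L ⊗ L → (L/D) ⊗ (L/D)` by right exactness of `⊗`. In finite
dimension the functionals `ξ ⊗ η` separate the points of `(L/D) ⊗ (L/D)`, and those pulled back to
`L ⊗ L` are exactly the `ξ ⊗ η` with `ξ, η ∈ D⁰`. Since `[ξ, η]_{g*} z = (ξ ⊗ η)(δ z)`, both sides of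
the equivalence say that `(ξ ⊗ η)(δ z) = 0` for all `z ∈ u` and `ξ, η ∈ [u,u]⁰`. -/

namespace TensorProduct

variable {R M N : Type*} [CommRing R] [AddCommGroup M] [Module R M] [AddCommGroup N] [Module R N]

theorem range_lTensor_subtype (q : Submodule R N) :
    LinearMap.range (q.subtype.lTensor M) = Submodule.map₂ (mk R M N) ⊤ q := by
  rw [LinearMap.lTensor, range_map, LinearMap.range_id, Submodule.range_subtype]

theorem range_rTensor_subtype (p : Submodule R M) :
    LinearMap.range (p.subtype.rTensor N) = Submodule.map₂ (mk R M N) p ⊤ := by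
  rw [LinearMap.rTensor, range_map, LinearMap.range_id, Submodule.range_subtype]

theorem ker_map_mkQ (p : Submodule R M) (q : Submodule R N) :
    LinearMap.ker (map p.mkQ q.mkQ) =
      Submodule.map₂ (mk R M N) ⊤ q ⊔ Submodule.map₂ (mk R M N) p ⊤ := by
  rw [map_ker (LinearMap.exact_subtype_mkQ p) p.mkQ_surjective
    (LinearMap.exact_subtype_mkQ q) q.mkQ_surjective, range_lTensor_subtype,
    range_rTensor_subtype]

theorem dualDistrib_tmul_map {M' N' : Type*} [AddCommGroup M'] [Module R M'] [AddCommGroup N']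
    [Module R N'] (f : M →ₗ[R] M') (g : N →ₗ[R] N') (φ : Module.Dual R M')
    (ψ : Module.Dual R N') (x : M ⊗[R] N) :
    dualDistrib R M' N' (φ ⊗ₜ ψ) (map f g x) = dualDistrib R M N ((φ ∘ₗ f) ⊗ₜ (ψ ∘ₗ g)) x := by
  induction x using TensorProduct.induction_on with
  | zero => simp
  | tmul m n => simp
  | add x y hx hy => simp only [map_add, hx, hy]

theorem eq_zero_of_forall_dualDistrib_tmul_eq_zero [Module.Free R M] [Module.Finite R M]
    [Module.Free R N] [Module.Finite R N] {x : M ⊗[R] N}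
    (hx : ∀ φ ψ, dualDistrib R M N (φ ⊗ₜ ψ) x = 0) : x = 0 := by
  refine (Module.forall_dual_apply_eq_zero_iff R x).mp fun f ↦ ?_
  obtain ⟨t, rfl⟩ := (dualDistribEquiv R M N).surjective f
  induction t using TensorProduct.induction_on with
  | zero => simp
  | tmul φ ψ => exact hx φ ψ
  | add s t hs ht => simp only [map_add, LinearMap.add_apply, hs, ht, add_zero]

theorem mem_map₂_top_sup_map₂_top_iff {K V W : Type*} [Field K]
    [AddCommGroup V] [Module K V] [FiniteDimensional K V]
    [AddCommGroup W] [Module K W] [FiniteDimensional K W]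
    (p : Submodule K V) (q : Submodule K W) (x : V ⊗[K] W) :
    x ∈ Submodule.map₂ (mk K V W) ⊤ q ⊔ Submodule.map₂ (mk K V W) p ⊤ ↔
      ∀ ξ ∈ p.dualAnnihilator, ∀ η ∈ q.dualAnnihilator, dualDistrib K V W (ξ ⊗ₜ η) x = 0 := by
  rw [← ker_map_mkQ, LinearMap.mem_ker, ← p.range_dualMap_mkQ_eq, ← q.range_dualMap_mkQ_eq]
  simp only [LinearMap.mem_range, forall_exists_index, forall_apply_eq_imp_iff,
    LinearMap.dualMap_apply', ← dualDistrib_tmul_map]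
  exact ⟨fun h φ ψ ↦ by rw [h, map_zero], eq_zero_of_forall_dualDistrib_tmul_eq_zero⟩

end TensorProduct

theorem dualBr_apply {K L : Type*} [Field K] [LieRing L] [LieAlgebra K L]
    (δ : L →ₗ[K] L ⊗[K] L) (ξ η : Module.Dual K L) (z : L) :
    dualBr K L δ ξ η z = dualDistrib K L L (ξ ⊗ₜ η) (δ z) := by
  simp only [dualBr, LinearMap.comp_apply]
  induction δ z using TensorProduct.induction_on with
  | zero => simp
  | tmul a b => simp
  | add x y hx hy => simp only [map_add, hx, hy]

theorem stmt9_general {K : Type*} [Field K]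
    {L : Type*} [LieRing L] [LieAlgebra K L] [FiniteDimensional K L]
    -- a Lie bialgebra cobracket δ on g
    (δ : L →ₗ[K] L ⊗[K] L)
    (u : LieSubalgebra K L) :
    -- strong coisotropy of u is equivalent to [[u,u]⁰,[u,u]⁰]_{g*} ⊆ u⁰
    (∀ z ∈ u, δ z ∈
        tpSub K L ⊤ (derived K L u) ⊔ tpSub K L (derived K L u) ⊤)
      ↔ (∀ ξ η : Module.Dual K L,
          ξ ∈ (derived K L u).dualAnnihilator → η ∈ (derived K L u).dualAnnihilator →
          dualBr K L δ ξ η ∈ u.toSubmodule.dualAnnihilator) := by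
  simp only [tpSub, TensorProduct.mem_map₂_top_sup_map₂_top_iff]
  refine ⟨fun h ξ η hξ hη ↦ (Submodule.mem_dualAnnihilator _).2 fun z hz ↦ ?_,
    fun h z hz ξ hξ η hη ↦ ?_⟩
  · rw [dualBr_apply]
    exact h z hz ξ hξ η hη
  · rw [← dualBr_apply]
    exact (Submodule.mem_dualAnnihilator _).1 (h ξ η hξ hη) z hz

theorem stmt9 {K : Type*} [Field K] [CharZero K]
    {L : Type*} [LieRing L] [LieAlgebra K L] [FiniteDimensional K L]
    -- a Lie bialgebra cobracket δ on g
    (δ : L →ₗ[K] L ⊗[K] L)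
    (hskew : ∀ z : L, TensorProduct.comm K L L (δ z) = - δ z)
    (hcoc : ∀ z w : L, δ ⁅z, w⁆ = ⁅z, δ w⁆ - ⁅w, δ z⁆)
    (u : LieSubalgebra K L) :
    -- strong coisotropy of u is equivalent to [[u,u]⁰,[u,u]⁰]_{g*} ⊆ u⁰
    (∀ z ∈ u, δ z ∈
        tpSub K L ⊤ (derived K L u) ⊔ tpSub K L (derived K L u) ⊤)
      ↔ (∀ ξ η : Module.Dual K L,
          ξ ∈ (derived K L u).dualAnnihilator → η ∈ (derived K L u).dualAnnihilator →
          dualBr K L δ ξ η ∈ u.toSubmodule.dualAnnihilator) :=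
  stmt9_general δ u
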